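/- Let M ∈ ℝ^{m×n} have rank d with reduced SVD M = U_d Σ_d V_d⊤, let Y = M + E, and let M̂ = Û_d Σ̂_d V̂_d⊤ be the rank-d truncated SVD of Y. Then for every row index j, ‖M̂_j − M_j‖² ≤ 2 ( (‖E‖_op² / σ_d(M)²)(‖E_j‖² + ‖M_j‖²) + ‖V_d V_d⊤ E_j‖² ), where X_j denotes the j-th row of X viewed as a column vector. -/
import Mathlib


open Matrix

noncomputable def matOpNorm {m n : ℕ} (A : Matrix (Fin m) (Fin n) ℝ) : ℝ :=
  ‖(Matrix.toEuclideanLin A).toContinuousLinearMap‖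

set_option maxHeartbeats 2000000

lemma mulVec_sq_le {m n : ℕ} (A : Matrix (Fin m) (Fin n) ℝ) (x : Fin n → ℝ) :
    ∑ i, (A.mulVec x i)^2 ≤ matOpNorm A ^ 2 * ∑ i, x i ^ 2 := by
  set x' : EuclideanSpace ℝ (Fin n) := (WithLp.equiv 2 _).symm x with hx'
  have h1 : ‖(Matrix.toEuclideanLin A).toContinuousLinearMap x'‖ ≤ matOpNorm A * ‖x'‖ :=
    ContinuousLinearMap.le_opNorm _ _
  have h2 : ‖(Matrix.toEuclideanLin A).toContinuousLinearMap x'‖^2 = ∑ i, (A.mulVec x i)^2 := by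
    rw [EuclideanSpace.norm_eq]
    rw [Real.sq_sqrt (by positivity)]
    simp [Matrix.toEuclideanLin_apply, sq_abs, hx']
  have h3 : ‖x'‖^2 = ∑ i, x i ^2 := by
    rw [EuclideanSpace.norm_eq, Real.sq_sqrt (by positivity)]
    simp [hx', sq_abs]
  nlinarith [norm_nonneg x', norm_nonneg (Matrix.toEuclideanLin A).toContinuousLinearMap,
    norm_nonneg ((Matrix.toEuclideanLin A).toContinuousLinearMap x')]

lemma dot_mulVec_mulVec {n : ℕ} (A B : Matrix (Fin n) (Fin n) ℝ) (x y : Fin n → ℝ) :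
    (A.mulVec x) ⬝ᵥ (B.mulVec y) = x ⬝ᵥ ((Aᵀ * B).mulVec y) := by
  rw [← Matrix.mulVec_mulVec, ← Matrix.vecMul_transpose, ← Matrix.dotProduct_mulVec]

lemma sum_sq_add_le {n : ℕ} (x y : Fin n → ℝ) :
    ∑ i, (x i + y i)^2 ≤ 2 * (∑ i, x i ^2) + 2 * ∑ i, y i ^2 := by
  have h : ∀ i ∈ Finset.univ, (x i + y i)^2 ≤ 2 * x i ^2 + 2 * y i ^2 := by
    intro i _; nlinarith [sq_nonneg (x i - y i)]
  calc ∑ i, (x i + y i)^2 ≤ ∑ i, (2 * x i ^2 + 2 * y i ^2) := Finset.sum_le_sum h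
    _ = 2 * (∑ i, x i ^2) + 2 * ∑ i, y i ^2 := by
        rw [Finset.sum_add_distrib, ← Finset.mul_sum, ← Finset.mul_sum]

lemma proj_mulVec_sq_le {n : ℕ} (A : Matrix (Fin n) (Fin n) ℝ) (hsym : Aᵀ = A)
    (hidem : A * A = A) (x : Fin n → ℝ) :
    ∑ i, (A.mulVec x i)^2 ≤ ∑ i, x i ^ 2 := by
  have h1 : ∑ i, (A.mulVec x i)^2 = (A.mulVec x) ⬝ᵥ (A.mulVec x) := by
    simp [dotProduct, sq]
  have h2 : (A.mulVec x) ⬝ᵥ (A.mulVec x) = x ⬝ᵥ (A.mulVec x) := by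
    rw [dot_mulVec_mulVec, hsym, hidem]
  have hcs := Finset.sum_mul_sq_le_sq_mul_sq Finset.univ x (A.mulVec x)
  have hd : x ⬝ᵥ (A.mulVec x) = ∑ i, x i * A.mulVec x i := rfl
  have hnn : (0:ℝ) ≤ ∑ i, (A.mulVec x i)^2 := by positivity
  nlinarith [Finset.sum_nonneg (fun i (_ : i ∈ Finset.univ) => sq_nonneg (x i))]

/-- Row-wise error bound for the truncated SVD estimator. `M` has rank `d` with
`M = M Vd Vd⊤`, `Y = M + E`, and `M̂ = Y V̂d V̂d⊤` is the rank-`d` truncated SVD of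
`Y`.  Assuming the Wedin sin-Θ bound `‖V̂d V̂d⊤ − Vd Vd⊤‖_op ≤ ‖E‖_op / σd` where
`σd = σ_d(M) > 0`, every row `j` satisfies
`‖M̂_j − M_j‖² ≤ 2((‖E‖_op²/σd²)(‖E_j‖² + ‖M_j‖²) + ‖Vd Vd⊤ E_j‖²)`. -/
theorem truncated_svd_row_bound {m n d : ℕ}
    (M E Mhat : Matrix (Fin m) (Fin n) ℝ)
    (Vd Vdhat : Matrix (Fin n) (Fin d) ℝ)
    (hrank : M.rank = d)
    (hVd : Vd.transpose * Vd = 1)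
    (hVdhat : Vdhat.transpose * Vdhat = 1)
    (hM : M = M * (Vd * Vd.transpose))
    (hMhat : Mhat = (M + E) * (Vdhat * Vdhat.transpose))
    (σd : ℝ) (hσd : 0 < σd)
    (hWedin : matOpNorm (Vdhat * Vdhat.transpose - Vd * Vd.transpose)
      ≤ matOpNorm E / σd)
    (j : Fin m) :
    ∑ i, (Mhat j i - M j i) ^ 2
      ≤ 2 * ((matOpNorm E ^ 2 / σd ^ 2) * ((∑ i, E j i ^ 2) + ∑ i, M j i ^ 2)
          + ∑ i, ((Vd * Vd.transpose).mulVec (E j) i) ^ 2) := by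
  set P := Vd * Vd.transpose with hP
  set Ph := Vdhat * Vdhat.transpose with hPh
  have hPsym : Pᵀ = P := by simp [hP, Matrix.transpose_mul]
  have hPhsym : Phᵀ = Ph := by simp [hPh, Matrix.transpose_mul]
  have hPP : P * P = P := by
    rw [hP, Matrix.mul_assoc, ← Matrix.mul_assoc Vd.transpose, hVd, Matrix.one_mul]
  have hPhPh : Ph * Ph = Ph := by
    rw [hPh, Matrix.mul_assoc, ← Matrix.mul_assoc Vdhat.transpose, hVdhat, Matrix.one_mul]
  -- rows of a product with a symmetric matrix
  have hrowmul : ∀ (X : Matrix (Fin m) (Fin n) ℝ) (B : Matrix (Fin n) (Fin n) ℝ)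
      (hB : Bᵀ = B) (i : Fin n), (X * B) j i = B.mulVec (X j) i := by
    intro X B hB i
    have hBs : ∀ a b, B a b = B b a := fun a b => congrFun (congrFun hB b) a
    simp only [Matrix.mul_apply, Matrix.mulVec, dotProduct]
    exact Finset.sum_congr rfl (fun k _ => by rw [hBs i k, mul_comm])
  have hmr : P.mulVec (M j) = M j := by
    funext i
    conv_rhs => rw [hM]
    exact (hrowmul M P hPsym i).symm
  set u := Ph.mulVec (E j) with hu
  set v := fun i => M j i - Ph.mulVec (M j) i with hv
  have hrow : ∀ i, Mhat j i - M j i = u i - v i := by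
    intro i
    rw [hMhat, hrowmul (M + E) Ph hPhsym i]
    have h1 : (M + E) j = fun k => M j k + E j k := by funext k; simp
    rw [h1]
    have h2 : Ph.mulVec (fun k => M j k + E j k) i
        = Ph.mulVec (M j) i + Ph.mulVec (E j) i := by
      simp [Matrix.mulVec, dotProduct, mul_add, Finset.sum_add_distrib]
    rw [h2, hu, hv]; ring
  -- orthogonality
  have horth : ∑ i, u i * v i = 0 := by
    have hv' : v = (1 - Ph).mulVec (M j) := by
      funext i
      simp [hv, Matrix.sub_mulVec, Matrix.one_mulVec]
    have hz : Phᵀ * (1 - Ph) = 0 := by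
      rw [hPhsym, Matrix.mul_sub, Matrix.mul_one, hPhPh, sub_self]
    have : ∑ i, u i * v i = u ⬝ᵥ v := rfl
    rw [this, hv', hu, dot_mulVec_mulVec, hz]
    simp [Matrix.zero_mulVec]
  set t := matOpNorm E / σd with ht
  have ht0 : 0 ≤ t := div_nonneg (norm_nonneg _) hσd.le
  set D := Ph - P with hD
  have hDbound : ∀ x : Fin n → ℝ, ∑ i, (D.mulVec x i)^2 ≤ t^2 * ∑ i, x i^2 := by
    intro x
    have h1 := mulVec_sq_le D x
    have h2 : matOpNorm D ^ 2 ≤ t ^ 2 := by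
      have hdn : (0:ℝ) ≤ matOpNorm D := norm_nonneg _
      nlinarith [hWedin]
    have hx0 : (0:ℝ) ≤ ∑ i, x i^2 := by positivity
    nlinarith
  -- bound for v
  have hvD : ∀ i, v i = -(D.mulVec (M j) i) := by
    intro i
    show M j i - Ph.mulVec (M j) i = -(D.mulVec (M j) i)
    rw [hD, Matrix.sub_mulVec]
    simp [hmr]
  have hSv : ∑ i, v i ^2 ≤ t^2 * ∑ i, (M j i)^2 := by
    have h1 : ∑ i, v i^2 = ∑ i, (D.mulVec (M j) i)^2 :=
      Finset.sum_congr rfl (fun i _ => by rw [hvD i]; ring)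
    rw [h1]; exact hDbound _
  -- bound for u
  set c := P.mulVec (E j) with hc
  set q := fun i => E j i - c i with hq
  have hq' : q = E j - c := funext fun i => rfl
  have hPc : P.mulVec c = c := by rw [hc, Matrix.mulVec_mulVec, hPP]
  have hPq : P.mulVec q = 0 := by
    rw [hq', Matrix.mulVec_sub, hPc, ← hc, sub_self]
  have huqc : u = Ph.mulVec c + D.mulVec q := by
    rw [hD, Matrix.sub_mulVec, hPq, hq', Matrix.mulVec_sub, hu]
    abel
  have hSu : ∑ i, u i ^2 ≤ 2 * (∑ i, c i^2) + 2 * (t^2 * ∑ i, (E j i)^2) := by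
    have h1 : ∑ i, u i^2 = ∑ i, (Ph.mulVec c i + D.mulVec q i)^2 :=
      Finset.sum_congr rfl (fun i _ => by rw [huqc]; rfl)
    have h2 := sum_sq_add_le (Ph.mulVec c) (D.mulVec q)
    have h3 : ∑ i, (Ph.mulVec c i)^2 ≤ ∑ i, c i^2 := proj_mulVec_sq_le Ph hPhsym hPhPh c
    have h4 : ∑ i, (D.mulVec q i)^2 ≤ t^2 * ∑ i, q i^2 := hDbound q
    have hec : (E j) ⬝ᵥ c = c ⬝ᵥ c := by
      conv_rhs => rw [hc, dot_mulVec_mulVec, hPsym, hPP, ← hc]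
    have hexp : ∑ i, q i^2 = (∑ i, (E j i)^2) - 2*(∑ i, E j i * c i) + ∑ i, c i^2 := by
      rw [Finset.sum_congr rfl (fun i (_ : i ∈ Finset.univ) =>
        show q i ^2 = (E j i)^2 - 2*(E j i * c i) + c i ^2 by simp only [hq]; ring)]
      rw [Finset.sum_add_distrib, Finset.sum_sub_distrib, ← Finset.mul_sum]
    have hdots : (E j) ⬝ᵥ c = ∑ i, E j i * c i := rfl
    have hcc : c ⬝ᵥ c = ∑ i, c i ^2 := by simp [dotProduct, sq]
    have h5 : ∑ i, q i^2 ≤ ∑ i, (E j i)^2 := by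
      have hc0 : (0:ℝ) ≤ ∑ i, c i^2 := by positivity
      rw [hexp]; rw [hdots, hcc] at hec; linarith
    have ht2 : (0:ℝ) ≤ t^2 := sq_nonneg t
    rw [h1]
    nlinarith
  -- combine
  have hsplit : ∑ i, (Mhat j i - M j i)^2 = (∑ i, u i^2) + ∑ i, v i^2 := by
    rw [Finset.sum_congr rfl (fun i (_ : i ∈ Finset.univ) =>
      show (Mhat j i - M j i)^2 = u i^2 - 2*(u i * v i) + v i ^2 by rw [hrow i]; ring)]
    rw [Finset.sum_add_distrib, Finset.sum_sub_distrib, ← Finset.mul_sum, horth]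
    ring
  have ht2eq : t^2 = matOpNorm E ^2 / σd ^2 := by rw [ht, div_pow]
  have hm0 : (0:ℝ) ≤ ∑ i, (M j i)^2 := by positivity
  have ht2 : (0:ℝ) ≤ t^2 := sq_nonneg t
  rw [hsplit, ← ht2eq]
  nlinarith [hSu, hSv]
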